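/- arXiv:2410.06360 — 3 statements merged into one kernel-verified Lean document; each statement's English description precedes it below -/
import Mathlib

section
/- Uniqueness of interface parameters from the leading reflection coefficient at two incidence angles: Let ρ₋, c₋ > 0 be fixed, and let ρ₊, ρ̃₊, c₊, c̃₊ > 0. For b ≥ 0 with b² < min(c₋^{-2}, c₊^{-2}, c̃₊^{-2}), define R(b) = (ρ₊ √(c₋^{-2} − b²) − ρ₋ √(c₊^{-2} − b²)) / (ρ₊ √(c₋^{-2} − b²) + ρ₋ √(c₊^{-2} − b²)) and define R̃(b) analogously with (ρ̃₊, c̃₊) in place of (ρ₊, c₊). If R(b) = R̃(b) and R(b₁) = R̃(b₁) for two values b, b₁ ≥ 0 in this range with b² ≠ b₁², then c₊ = c̃₊ and ρ₊ = ρ̃₊. -/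
open Real

noncomputable section

/-- The leading-order (principal symbol) reflection coefficient of the acoustic
transmission problem at incidence parameter `b`. -/
def Rcoef (ρm ρp cm cp b : ℝ) : ℝ :=
  (ρp * Real.sqrt ((cm ^ 2)⁻¹ - b ^ 2) - ρm * Real.sqrt ((cp ^ 2)⁻¹ - b ^ 2)) /
  (ρp * Real.sqrt ((cm ^ 2)⁻¹ - b ^ 2) + ρm * Real.sqrt ((cp ^ 2)⁻¹ - b ^ 2))

lemma Rcoef_key (ρm cm ρp ρpt cp cpt b : ℝ)
    (hρm : 0 < ρm) (hρp : 0 < ρp) (hρpt : 0 < ρpt)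
    (h1 : b ^ 2 < (cm ^ 2)⁻¹) (h2 : b ^ 2 < (cp ^ 2)⁻¹) (h3 : b ^ 2 < (cpt ^ 2)⁻¹)
    (hR : Rcoef ρm ρp cm cp b = Rcoef ρm ρpt cm cpt b) :
    ρp ^ 2 * ((cpt ^ 2)⁻¹ - b ^ 2) = ρpt ^ 2 * ((cp ^ 2)⁻¹ - b ^ 2) := by
  unfold Rcoef at hR
  set sm := Real.sqrt ((cm ^ 2)⁻¹ - b ^ 2) with hsm_def
  set sp := Real.sqrt ((cp ^ 2)⁻¹ - b ^ 2) with hsp_def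
  set spt := Real.sqrt ((cpt ^ 2)⁻¹ - b ^ 2) with hspt_def
  have hsm : 0 < sm := Real.sqrt_pos.mpr (by linarith)
  have hsp : 0 < sp := Real.sqrt_pos.mpr (by linarith)
  have hspt : 0 < spt := Real.sqrt_pos.mpr (by linarith)
  have hD : ρp * sm + ρm * sp ≠ 0 := by positivity
  have hDt : ρpt * sm + ρm * spt ≠ 0 := by positivity
  rw [div_eq_div_iff hD hDt] at hR
  have h4 : 2 * ρm * sm * (ρp * spt - ρpt * sp) = 0 := by linear_combination hR
  have h5 : ρp * spt = ρpt * sp := by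
    rcases mul_eq_zero.mp h4 with h | h
    · exfalso; nlinarith
    · linarith
  have hsp2 : sp ^ 2 = (cp ^ 2)⁻¹ - b ^ 2 := Real.sq_sqrt (by linarith)
  have hspt2 : spt ^ 2 = (cpt ^ 2)⁻¹ - b ^ 2 := Real.sq_sqrt (by linarith)
  calc ρp ^ 2 * ((cpt ^ 2)⁻¹ - b ^ 2) = (ρp * spt) ^ 2 := by rw [← hspt2]; ring
    _ = (ρpt * sp) ^ 2 := by rw [h5]
    _ = ρpt ^ 2 * ((cp ^ 2)⁻¹ - b ^ 2) := by rw [← hsp2]; ring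

/-- Uniqueness of the interface parameters from the leading reflection coefficient at two
incidence angles: if the reflection coefficients for `(ρ₊, c₊)` and `(ρ̃₊, c̃₊)` agree at
two admissible incidence parameters `b, b₁ ≥ 0` with `b² ≠ b₁²`, then `c₊ = c̃₊` and
`ρ₊ = ρ̃₊`. -/
theorem interface_uniqueness_from_reflection
    (ρm cm : ℝ) (hρm : 0 < ρm) (hcm : 0 < cm)
    (ρp ρpt cp cpt : ℝ)
    (hρp : 0 < ρp) (hρpt : 0 < ρpt) (hcp : 0 < cp) (hcpt : 0 < cpt)
    (b b1 : ℝ) (hb : 0 ≤ b) (hb1 : 0 ≤ b1)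
    (hbrange : b ^ 2 < min ((cm ^ 2)⁻¹) (min ((cp ^ 2)⁻¹) ((cpt ^ 2)⁻¹)))
    (hb1range : b1 ^ 2 < min ((cm ^ 2)⁻¹) (min ((cp ^ 2)⁻¹) ((cpt ^ 2)⁻¹)))
    (hbb1 : b ^ 2 ≠ b1 ^ 2)
    (hR : Rcoef ρm ρp cm cp b = Rcoef ρm ρpt cm cpt b)
    (hR1 : Rcoef ρm ρp cm cp b1 = Rcoef ρm ρpt cm cpt b1) :
    cp = cpt ∧ ρp = ρpt := by
  simp only [lt_min_iff] at hbrange hb1range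
  obtain ⟨ha1, ha2, ha3⟩ := hbrange
  obtain ⟨hc1, hc2, hc3⟩ := hb1range
  have E1 := Rcoef_key ρm cm ρp ρpt cp cpt b hρm hρp hρpt ha1 ha2 ha3 hR
  have E2 := Rcoef_key ρm cm ρp ρpt cp cpt b1 hρm hρp hρpt hc1 hc2 hc3 hR1
  have hne : b1 ^ 2 - b ^ 2 ≠ 0 := fun h => hbb1 (by linarith)
  have hρsq : ρp ^ 2 = ρpt ^ 2 := by
    have h : (ρp ^ 2 - ρpt ^ 2) * (b1 ^ 2 - b ^ 2) = 0 := by linarith [E1, E2]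
    rcases mul_eq_zero.mp h with h | h
    · linarith
    · exact absurd h hne
  have hρ : ρp = ρpt := by nlinarith
  have hcsq : (cp ^ 2)⁻¹ = (cpt ^ 2)⁻¹ := by
    have hρp2 : (0:ℝ) < ρp ^ 2 := by positivity
    rw [hρsq] at E1
    have := mul_left_cancel₀ (ne_of_gt (by positivity : (0:ℝ) < ρpt ^ 2)) E1
    linarith
  have hc : cp = cpt := by
    have h2 : cp ^ 2 = cpt ^ 2 := by
      have := inv_injective hcsq
      linarith [this]
    nlinarith
  exact ⟨hc, hρ⟩
end
end

section
/- Linear independence of first-order amplitude contributions on the hyperbolic set: Let c > 0 and ρ > 0 be fixed, let a, ã, d, d̃ ∈ ℝ and V, Ṽ ∈ ℝ³. Suppose that for every (η', τ) ∈ ℝ² × (0, ∞) with |η'|² < c^{-2}τ², setting ξ₃ = √(c^{-2}τ² − |η'|²), one has (1/2) a (1 − 3|η'|²/ξ₃²) + d + ρ (c²/τ²) (η'₁ V₁ + η'₂ V₂ + ξ₃ V₃) ξ₃ = (1/2) ã (1 − 3|η'|²/ξ₃²) + d̃ + ρ (c²/τ²) (η'₁ Ṽ₁ + η'₂ Ṽ₂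 + ξ₃ Ṽ₃) ξ₃. Then a = ã, d = d̃, and V = Ṽ. -/
open Real

noncomputable section

set_option maxHeartbeats 1600000

/-- Linear independence of the first-order amplitude contributions on the hyperbolic set:
if for all `(η', τ)` with `τ > 0` and `|η'|² < c⁻²τ²`, setting
`ξ₃ = √(c⁻²τ² − |η'|²)`, the two affine combinations
`(1/2) a (1 − 3|η'|²/ξ₃²) + d + ρ(c²/τ²)(η'₁V₁ + η'₂V₂ + ξ₃V₃)ξ₃` agree for the data
`(a, d, V)` and `(ã, d̃, Ṽ)`, then `a = ã`, `d = d̃` and `V = Ṽ`. -/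
theorem first_order_amplitude_contributions_independent
    (c ρ : ℝ) (hc : 0 < c) (hρ : 0 < ρ)
    (a a' d d' : ℝ) (V V' : Fin 3 → ℝ)
    (h : ∀ η1 η2 τ : ℝ, 0 < τ → η1 ^ 2 + η2 ^ 2 < τ ^ 2 / c ^ 2 →
      (1 / 2) * a *
          (1 - 3 * (η1 ^ 2 + η2 ^ 2) / (Real.sqrt (τ ^ 2 / c ^ 2 - (η1 ^ 2 + η2 ^ 2))) ^ 2)
        + d
        + ρ * (c ^ 2 / τ ^ 2) *
            (η1 * V 0 + η2 * V 1 + Real.sqrt (τ ^ 2 / c ^ 2 - (η1 ^ 2 + η2 ^ 2)) * V 2) *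
            Real.sqrt (τ ^ 2 / c ^ 2 - (η1 ^ 2 + η2 ^ 2))
      = (1 / 2) * a' *
          (1 - 3 * (η1 ^ 2 + η2 ^ 2) / (Real.sqrt (τ ^ 2 / c ^ 2 - (η1 ^ 2 + η2 ^ 2))) ^ 2)
        + d'
        + ρ * (c ^ 2 / τ ^ 2) *
            (η1 * V' 0 + η2 * V' 1 + Real.sqrt (τ ^ 2 / c ^ 2 - (η1 ^ 2 + η2 ^ 2)) * V' 2) *
            Real.sqrt (τ ^ 2 / c ^ 2 - (η1 ^ 2 + η2 ^ 2))) :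
    a = a' ∧ d = d' ∧ V = V' := by

  have hc2 : (0:ℝ) < c ^ 2 := by positivity
  have hcc : c ^ 2 / c ^ 2 = 1 := div_self (ne_of_gt hc2)
  -- specialize to τ = c
  have h' : ∀ η1 η2 : ℝ, η1 ^ 2 + η2 ^ 2 < 1 →
      (1 / 2) * a * (1 - 3 * (η1 ^ 2 + η2 ^ 2) / (Real.sqrt (1 - (η1 ^ 2 + η2 ^ 2))) ^ 2)
        + d + ρ * ((η1 * V 0 + η2 * V 1 + Real.sqrt (1 - (η1 ^ 2 + η2 ^ 2)) * V 2) *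
            Real.sqrt (1 - (η1 ^ 2 + η2 ^ 2)))
      = (1 / 2) * a' * (1 - 3 * (η1 ^ 2 + η2 ^ 2) / (Real.sqrt (1 - (η1 ^ 2 + η2 ^ 2))) ^ 2)
        + d' + ρ * ((η1 * V' 0 + η2 * V' 1 + Real.sqrt (1 - (η1 ^ 2 + η2 ^ 2)) * V' 2) *
            Real.sqrt (1 - (η1 ^ 2 + η2 ^ 2))) := by
    intro η1 η2 hb
    have := h η1 η2 c hc (by rw [hcc]; exact hb)
    rw [hcc] at this
    linarith [this]
  -- point (0,0)
  have H0 := h' 0 0 (by norm_num)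
  norm_num [Real.sqrt_one] at H0
  -- points (±1/2, 0)
  set r : ℝ := Real.sqrt (3/4) with hr
  have hrpos : 0 < r := Real.sqrt_pos.mpr (by norm_num)
  have hrsq : r ^ 2 = 3/4 := Real.sq_sqrt (by norm_num)
  have e34 : (1 : ℝ) - ((1/2:ℝ) ^ 2 + 0 ^ 2) = 3/4 := by norm_num
  have H2 := h' (1/2) 0 (by norm_num)
  have H3 := h' (-(1/2)) 0 (by norm_num)
  have H4 := h' 0 (1/2) (by norm_num)
  have H5 := h' 0 (-(1/2)) (by norm_num)
  rw [show ((1/2:ℝ)) ^ 2 + 0 ^ 2 = 1/4 by norm_num] at H2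
  rw [show (-(1/2:ℝ)) ^ 2 + 0 ^ 2 = 1/4 by norm_num] at H3
  rw [show (0:ℝ) ^ 2 + (1/2) ^ 2 = 1/4 by norm_num] at H4
  rw [show (0:ℝ) ^ 2 + (-(1/2:ℝ)) ^ 2 = 1/4 by norm_num] at H5
  rw [show (1:ℝ) - 1/4 = 3/4 by norm_num, ← hr] at H2 H3 H4 H5
  rw [hrsq] at H2 H3 H4 H5
  norm_num at H2 H3 H4 H5
  -- points (±q, 0) with q = sqrt (1/2)
  set q : ℝ := Real.sqrt (1/2) with hq
  have hqpos : 0 < q := Real.sqrt_pos.mpr (by norm_num)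
  have hqsq : q ^ 2 = 1/2 := Real.sq_sqrt (by norm_num)
  have H6 := h' q 0 (by rw [hqsq]; norm_num)
  have H7 := h' (-q) 0 (by rw [neg_pow]; rw [hqsq]; norm_num)
  rw [show q ^ 2 + (0:ℝ) ^ 2 = 1/2 by rw [hqsq]; norm_num] at H6
  rw [show (-q) ^ 2 + (0:ℝ) ^ 2 = 1/2 by rw [neg_pow, hqsq]; norm_num] at H7
  rw [show (1:ℝ) - 1/2 = 1/2 by norm_num, ← hq] at H6 H7
  rw [hqsq] at H6 H7
  norm_num at H6 H7
  -- derive linear relations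
  have hrne : r ≠ 0 := ne_of_gt hrpos
  have hW0 : V 0 = V' 0 := by
    have e2 : ρ * r * (V 0 - V' 0) = 0 := by linear_combination H2 - H3
    have := mul_eq_zero.mp e2
    rcases this with h1 | h1
    · exact absurd h1 (mul_ne_zero (ne_of_gt hρ) hrne)
    · exact sub_eq_zero.mp h1
  have hW1 : V 1 = V' 1 := by
    have e2 : ρ * r * (V 1 - V' 1) = 0 := by linear_combination H4 - H5
    rcases mul_eq_zero.mp e2 with h1 | h1
    · exact absurd h1 (mul_ne_zero (ne_of_gt hρ) hrne)
    · exact sub_eq_zero.mp h1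
  have e0 : (1/2) * (a - a') + (d - d') + ρ * (V 2 - V' 2) = 0 := by
    linear_combination H0
  have e3 : (d - d') + (3/4) * (ρ * (V 2 - V' 2)) = 0 := by
    linear_combination (1/2) * H2 + (1/2) * H3 - ρ * (V 2 - V' 2) * hrsq
  have e6 : -(a - a') + (d - d') + (1/2) * (ρ * (V 2 - V' 2)) = 0 := by
    linear_combination (1/2) * H6 + (1/2) * H7 - ρ * (V 2 - V' 2) * hqsq
  have hz : ρ * (V 2 - V' 2) = 0 := by linarith
  have ha : a = a' := by linarith
  have hW2 : V 2 = V' 2 := by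
    rcases mul_eq_zero.mp hz with h1 | h1
    · exact absurd h1 (ne_of_gt hρ)
    · exact sub_eq_zero.mp h1
  have hd : d = d' := by linarith
  refine ⟨ha, hd, ?_⟩
  funext i
  fin_cases i <;> assumption
end
end

section
/- Saint-Venant operator applied to a gradient square tensor involves only second derivatives: Let U ⊆ ℝⁿ be open and f ∈ C³(U). Then for all indices, (W(∇f ⊗ ∇f))_{i₁i₂j₁j₂} = 2( ∂²_{i₁j₂}f · ∂²_{i₂j₁}f − ∂²_{i₁i₂}f · ∂²_{j₁j₂}f ); in particular all third-order derivatives of f cancel, and the full trace satisfies ∑_{i,j=1}^{n} (W(∇f ⊗ ∇f))_{iijj} = 2( |∇²f|² − (Δf)² ), where |∇²f|² = ∑_{i,j} (∂²_{ij}f)² is the squared Frobenius norm of the Hessian. -/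
/-!
By the Leibniz rule,
`∂²_{cd}(∂_a f ∂_b f) = ∂³_{cda}f ∂_b f + ∂²_{da}f ∂²_{cb}f + ∂²_{ca}f ∂²_{db}f + ∂_a f ∂³_{cdb}f`.
In the alternating sum defining `W`, the third-order terms cancel in pairs because the third
partials of a `C³` function are fully symmetric, and the Hessian products collapse by symmetry
of the Hessian. The trace identity is then the expansion of `∑_{i,j} (H_{ij}² − H_{ii} H_{jj})`.
-/

noncomputable section

/-- `i`-th coordinate unit vector of `ℝⁿ`. -/
def en (n : ℕ) (i : Fin n) : EuclideanSpace ℝ (Fin n) := EuclideanSpace.single i 1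

/-- First partial derivative `∂f/∂x_i` at `x`. -/
def pd (n : ℕ) (f : EuclideanSpace ℝ (Fin n) → ℝ) (x : EuclideanSpace ℝ (Fin n))
    (i : Fin n) : ℝ :=
  fderiv ℝ f x (en n i)

/-- Second partial derivative `∂²f/∂x_i ∂x_j` at `x`. -/
def pd2 (n : ℕ) (f : EuclideanSpace ℝ (Fin n) → ℝ) (x : EuclideanSpace ℝ (Fin n))
    (i j : Fin n) : ℝ :=
  pd n (fun y => pd n f y j) x i

/-- The Saint-Venant operator applied to a 2-tensor field `B`:
`(WB)_{i₁i₂j₁j₂} = ∂²_{i₁i₂}B_{j₁j₂} + ∂²_{j₁j₂}B_{i₁i₂} − ∂²_{i₂j₁}B_{i₁j₂} − ∂²_{i₁j₂}B_{i₂j₁}`. -/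
def saintVenant (n : ℕ) (B : EuclideanSpace ℝ (Fin n) → Fin n → Fin n → ℝ)
    (x : EuclideanSpace ℝ (Fin n)) (i₁ i₂ j₁ j₂ : Fin n) : ℝ :=
  pd2 n (fun y => B y j₁ j₂) x i₁ i₂ + pd2 n (fun y => B y i₁ i₂) x j₁ j₂
    - pd2 n (fun y => B y i₁ j₂) x i₂ j₁ - pd2 n (fun y => B y i₂ j₁) x i₁ j₂

/-- `∂³f/∂x_i ∂x_j ∂x_k` at `x`. -/
def pd3 (n : ℕ) (f : EuclideanSpace ℝ (Fin n) → ℝ) (x : EuclideanSpace ℝ (Fin n))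
    (i j k : Fin n) : ℝ :=
  pd2 n (fun y => pd n f y k) x i j

section PartialDerivatives

variable {n : ℕ} {f g h : EuclideanSpace ℝ (Fin n) → ℝ} {x : EuclideanSpace ℝ (Fin n)}

theorem ContDiffAt.pd {m : WithTop ℕ∞} (hf : ContDiffAt ℝ (m + 1) f x) (i : Fin n) :
    ContDiffAt ℝ m (fun y => pd n f y i) x :=
  (hf.fderiv_right le_rfl).clm_apply contDiffAt_const

theorem pd_congr {i : Fin n} (he : g =ᶠ[nhds x] h) : pd n g x i = pd n h x i := by
  rw [pd, pd, he.fderiv_eq]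

theorem pd_mul {i : Fin n} (hg : DifferentiableAt ℝ g x) (hh : DifferentiableAt ℝ h x) :
    pd n (fun y => g y * h y) x i = pd n g x i * h x + g x * pd n h x i := by
  simp only [pd, fderiv_fun_mul hg hh, add_apply, smul_apply, smul_eq_mul]
  ring

theorem pd_add {i : Fin n} (hg : DifferentiableAt ℝ g x) (hh : DifferentiableAt ℝ h x) :
    pd n (fun y => g y + h y) x i = pd n g x i + pd n h x i := by
  simp only [pd, fderiv_fun_add hg hh, add_apply]

theorem pd2_mul (hg : ContDiffAt ℝ 2 g x) (hh : ContDiffAt ℝ 2 h x) (i j : Fin n) :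
    pd2 n (fun y => g y * h y) x i j
      = pd2 n g x i j * h x + pd n g x j * pd n h x i
        + (pd n g x i * pd n h x j + g x * pd2 n h x i j) := by
  have hgd := (hg.pd (m := 1) j).differentiableAt one_ne_zero
  have hhd := (hh.pd (m := 1) j).differentiableAt one_ne_zero
  have hprod : (fun y => pd n (fun z => g z * h z) y j)
      =ᶠ[nhds x] fun y => pd n g y j * h y + g y * pd n h y j := by
    filter_upwards [hg.eventually (by simp), hh.eventually (by simp)] with y hgy hhy
    exact pd_mul (hgy.differentiableAt two_ne_zero) (hhy.differentiableAt two_ne_zero)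
  have hgx := hg.differentiableAt two_ne_zero
  have hhx := hh.differentiableAt two_ne_zero
  rw [pd2, pd_congr hprod, pd_add (hgd.fun_mul hhx) (hgx.fun_mul hhd), pd_mul hgd hhx,
    pd_mul hgx hhd]
  rfl

theorem pd2_eq_fderiv_fderiv (hf : DifferentiableAt ℝ (fderiv ℝ f) x) (i j : Fin n) :
    pd2 n f x i j = fderiv ℝ (fderiv ℝ f) x (en n i) (en n j) := by
  have hj : HasFDerivAt (fun y => pd n f y j)
      ((ContinuousLinearMap.apply ℝ ℝ (en n j)).comp (fderiv ℝ (fderiv ℝ f) x)) x :=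
    (ContinuousLinearMap.apply ℝ ℝ (en n j)).hasFDerivAt.comp x hf.hasFDerivAt
  rw [pd2, pd, hj.fderiv]
  rfl

theorem pd2_comm (hf : ContDiffAt ℝ 2 f x) (i j : Fin n) : pd2 n f x i j = pd2 n f x j i := by
  have hd := (hf.fderiv_right (m := 1) le_rfl).differentiableAt one_ne_zero
  rw [pd2_eq_fderiv_fderiv hd, pd2_eq_fderiv_fderiv hd, hf.isSymmSndFDerivAt (by simp)]

theorem pd3_comm_left (hf : ContDiffAt ℝ 3 f x) (i j k : Fin n) :
    pd3 n f x i j k = pd3 n f x j i k :=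
  pd2_comm (hf.pd (m := 2) k) i j

theorem pd3_comm_right (hf : ContDiffAt ℝ 3 f x) (i j k : Fin n) :
    pd3 n f x i j k = pd3 n f x i k j :=
  -- the Hessian is symmetric on a whole neighbourhood of `x`
  pd_congr <| (hf.of_le (by norm_num) |>.eventually (by simp)).mono fun _ hy => pd2_comm hy j k

theorem pd2_pd_mul_pd (hf : ContDiffAt ℝ 3 f x) (a b i j : Fin n) :
    pd2 n (fun y => pd n f y a * pd n f y b) x i j
      = pd3 n f x i j a * pd n f x b + pd2 n f x j a * pd2 n f x i b
        + (pd2 n f x i a * pd2 n f x j b + pd n f x a * pd3 n f x i j b) :=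
  pd2_mul (hf.pd (m := 2) a) (hf.pd (m := 2) b) i j

end PartialDerivatives

theorem saintVenant_pd_mul_pd {n : ℕ} {f : EuclideanSpace ℝ (Fin n) → ℝ}
    {x : EuclideanSpace ℝ (Fin n)} (hf : ContDiffAt ℝ 3 f x) (i₁ i₂ j₁ j₂ : Fin n) :
    saintVenant n (fun y i j => pd n f y i * pd n f y j) x i₁ i₂ j₁ j₂
      = 2 * (pd2 n f x i₁ j₂ * pd2 n f x i₂ j₁ - pd2 n f x i₁ i₂ * pd2 n f x j₁ j₂) := by
  have hH := pd2_comm (hf.of_le (by norm_num))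
  have hT₁ := pd3_comm_left hf
  have hT₂ := pd3_comm_right hf
  have e₁ : pd3 n f x i₁ i₂ j₁ = pd3 n f x i₂ j₁ i₁ := by rw [hT₁, hT₂]
  have e₂ : pd3 n f x i₁ i₂ j₂ = pd3 n f x i₁ j₂ i₂ := hT₂ ..
  have e₃ : pd3 n f x j₁ j₂ i₁ = pd3 n f x i₁ j₂ j₁ := by rw [hT₂, hT₁, hT₂]
  have e₄ : pd3 n f x j₁ j₂ i₂ = pd3 n f x i₂ j₁ j₂ := by rw [hT₂, hT₁]
  rw [saintVenant, pd2_pd_mul_pd hf, pd2_pd_mul_pd hf, pd2_pd_mul_pd hf, pd2_pd_mul_pd hf]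
  linear_combination pd n f x j₂ * e₁ + pd n f x j₁ * e₂ + pd n f x i₂ * e₃ + pd n f x i₁ * e₄
    + pd2 n f x j₁ i₂ * hH j₂ i₁ + pd2 n f x i₁ j₂ * hH j₁ i₂
    + (pd2 n f x j₂ i₂ - pd2 n f x i₂ j₂) * hH j₁ i₁
    - pd2 n f x j₁ j₂ * hH i₂ i₁ - pd2 n f x i₁ i₂ * hH j₂ j₁

theorem sum_sum_sq_sub_mul_diag {ι R : Type*} [Fintype ι] [CommRing R] (H : ι → ι → R) :
    ∑ i, ∑ j, (H i j ^ 2 - H i i * H j j) = ∑ i, ∑ j, H i j ^ 2 - (∑ i, H i i) ^ 2 := by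
  simp only [Finset.sum_sub_distrib, sq (∑ i, H i i), Finset.sum_mul_sum]

/-- The Saint-Venant operator applied to `∇f ⊗ ∇f` involves only second derivatives:
`(W(∇f⊗∇f))_{i₁i₂j₁j₂} = 2(∂²_{i₁j₂}f ∂²_{i₂j₁}f − ∂²_{i₁i₂}f ∂²_{j₁j₂}f)`, and its full
trace equals `2(|∇²f|² − (Δf)²)`. -/
theorem saintVenant_gradient_square
    (n : ℕ) (U : Set (EuclideanSpace ℝ (Fin n))) (hU : IsOpen U)
    (f : EuclideanSpace ℝ (Fin n) → ℝ) (hf : ContDiffOn ℝ 3 f U) :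
    ∀ x ∈ U,
      (∀ i₁ i₂ j₁ j₂ : Fin n,
        saintVenant n (fun y i j => pd n f y i * pd n f y j) x i₁ i₂ j₁ j₂
          = 2 * (pd2 n f x i₁ j₂ * pd2 n f x i₂ j₁ - pd2 n f x i₁ i₂ * pd2 n f x j₁ j₂))
      ∧ ∑ i, ∑ j, saintVenant n (fun y i j => pd n f y i * pd n f y j) x i i j j
          = 2 * ((∑ i, ∑ j, (pd2 n f x i j) ^ 2) - (∑ i, pd2 n f x i i) ^ 2) := by
  intro x hx
  have hW := saintVenant_pd_mul_pd (hf.contDiffAt (hU.mem_nhds hx))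
  refine ⟨hW, ?_⟩
  simp only [hW, ← sq, ← Finset.mul_sum, sum_sum_sq_sub_mul_diag]
end
end
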